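/- Suppose Algorithm SCGLED converges: i.e., V*' is a fixed point of the one-step Oja update with matrix −F*' where F*' = Xᵀ F(XV*')X, the columns of V*' are orthonormal, and X satisfies Xᵀ S X = I. Then V* = XV*' satisfies the generalized eigenvalue equation F(V*)V* = S V* Λ for some diagonal matrix Λ. -/

import Mathlib

/-!
The Gram–Schmidt process is triangular: its output spans the same flag as its input. So if the
orthonormal family `v` is fixed by the Oja step `v ↦ GS(v + η M v)`, then `M vᵢ` lies in the span
of `v₁, …, vᵢ`, i.e. `Vᵀ M V` is upper triangular. Since `M` is symmetric, `Vᵀ M V` is also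
symmetric, hence diagonal, and each `vᵢ` is an eigenvector of `M`. With `M = -Xᵀ F X` and
`S X Xᵀ = 1` (from `Xᵀ S X = 1`), this becomes the generalized eigenvalue equation.
-/

open Matrix Submodule Set InnerProductSpace

section InnerProductSpace

variable {𝕜 E ι : Type*} [RCLike 𝕜] [NormedAddCommGroup E] [InnerProductSpace 𝕜 E]

theorem Orthonormal.inner_eq_zero_of_mem_span_image {v : ι → E} (hv : Orthonormal 𝕜 v)
    {s : Set ι} {i : ι} (hi : i ∉ s) {x : E} (hx : x ∈ span 𝕜 (v '' s)) :
    inner 𝕜 x (v i) = 0 := by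
  obtain ⟨l, hl, rfl⟩ := Finsupp.mem_span_image_iff_linearCombination 𝕜 |>.1 hx
  exact hv.inner_finsupp_eq_zero hi hl

theorem mem_span_Iic_of_gramSchmidtNormed_add_smul_eq [LinearOrder ι] [LocallyFiniteOrderBot ι]
    [WellFoundedLT ι] {v w : ι → E} {η : 𝕜} (hη : η ≠ 0)
    (h : gramSchmidtNormed 𝕜 (fun i => v i + η • w i) = v) (i : ι) :
    w i ∈ span 𝕜 (v '' Iic i) := by
  have hflag : span 𝕜 (v '' Iic i) = span 𝕜 ((fun i => v i + η • w i) '' Iic i) := by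
    conv_lhs => rw [← h]
    rw [span_gramSchmidtNormed, span_gramSchmidt_Iic]
  have hsum : v i + η • w i ∈ span 𝕜 (v '' Iic i) :=
    hflag ▸ subset_span (mem_image_of_mem _ self_mem_Iic)
  have hv : v i ∈ span 𝕜 (v '' Iic i) := subset_span (mem_image_of_mem _ self_mem_Iic)
  simpa [inv_smul_smul₀ hη] using smul_mem _ η⁻¹ (sub_mem hsum hv)

theorem LinearMap.IsSymmetric.apply_eq_inner_smul_of_mem_span_Iic [PartialOrder ι]
    {A : E →ₗ[𝕜] E} (hA : A.IsSymmetric) {v : ι → E} (hv : Orthonormal 𝕜 v)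
    (htri : ∀ i, A (v i) ∈ span 𝕜 (v '' Iic i)) (i : ι) :
    A (v i) = inner 𝕜 (v i) (A (v i)) • v i := by
  classical
  set u := A (v i) - inner 𝕜 (v i) (A (v i)) • v i
  have hu : u ∈ span 𝕜 (v '' Iic i) :=
    sub_mem (htri i) (smul_mem _ _ (subset_span (mem_image_of_mem _ self_mem_Iic)))
  have hperp : span 𝕜 (v '' Iic i) ⟂ 𝕜 ∙ u := by
    rw [isOrtho_span]
    rintro _ ⟨j, hj, rfl⟩ _ rfl
    rcases (mem_Iic.1 hj).eq_or_lt with rfl | hji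
    · simp [u, inner_sub_right, inner_smul_right, hv.1 j]
    · have hi : i ∉ Iic j := fun h => (mem_Iic.1 h).not_gt hji
      rw [inner_sub_right, inner_smul_right, ← hA, hv.inner_eq_zero_of_mem_span_image hi (htri j),
        orthonormal_iff_ite.1 hv, if_neg hji.ne, mul_zero, sub_zero]
  exact sub_eq_zero.1 <| inner_self_eq_zero.1 <| hperp.inner_eq hu (mem_span_singleton_self u)

theorem LinearMap.IsSymmetric.apply_eq_inner_smul_of_gramSchmidtNormed_eq [LinearOrder ι]
    [LocallyFiniteOrderBot ι] [WellFoundedLT ι] {A : E →ₗ[𝕜] E} (hA : A.IsSymmetric)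
    {v : ι → E} (hv : Orthonormal 𝕜 v) {η : 𝕜} (hη : η ≠ 0)
    (h : gramSchmidtNormed 𝕜 (fun i => v i + η • A (v i)) = v) (i : ι) :
    A (v i) = inner 𝕜 (v i) (A (v i)) • v i :=
  hA.apply_eq_inner_smul_of_mem_span_Iic hv (mem_span_Iic_of_gramSchmidtNormed_add_smul_eq hη h) i

end InnerProductSpace

theorem Matrix.mul_eq_mul_diagonal_of_mulVec_transpose {m n R : Type*} [Fintype m]
    [Fintype n] [DecidableEq n] [CommSemiring R] {M : Matrix m m R} {V : Matrix m n R} {c : n → R}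
    (h : ∀ i, M *ᵥ Vᵀ i = c i • Vᵀ i) : M * V = V * diagonal c := by
  ext a i
  rw [mul_diagonal, mul_comm]
  exact congrFun (h i) a

theorem stmt_15_general (N k : ℕ)
    (F : Matrix (Fin N) (Fin k) ℝ → Matrix (Fin N) (Fin N) ℝ)
    (hFsymm : ∀ V, (F V).IsSymm)
    (S X : Matrix (Fin N) (Fin N) ℝ)
    (hXS : Xᵀ * S * X = 1)
    (η : ℝ) (hη : 0 < η)
    (v' : Fin k → EuclideanSpace ℝ (Fin N))
    (hortho : Orthonormal ℝ v')
    (V' : Matrix (Fin N) (Fin k) ℝ) (hV' : V' = Matrix.of fun n i => v' i n)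
    (M : Matrix (Fin N) (Fin N) ℝ) (hMdef : M = -(Xᵀ * F (X * V') * X))
    (hfix : @InnerProductSpace.gramSchmidtNormed ℝ (EuclideanSpace ℝ (Fin N)) _ _ _ (Fin k) _ _
        (inferInstance : WellFoundedLT (Fin k))
        (fun i => v' i + η • (WithLp.equiv 2 (Fin N → ℝ)).symm (M.mulVec (v' i))) = v') :
    ∃ Λ : Fin k → ℝ,
      F (X * V') * (X * V') = S * (X * V') * Matrix.diagonal Λ := by
  set c := fun i => inner ℝ (v' i) (M.toEuclideanLin (v' i))
  have hMsymm : M.toEuclideanLin.IsSymmetric := by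
    rw [isSymmetric_toEuclideanLin_iff, isHermitian_iff_isSymm, hMdef]
    exact IsSymm.neg (by simp [IsSymm, transpose_mul, (hFsymm _).eq, Matrix.mul_assoc])
  have hMV : M * V' = V' * diagonal c := by
    refine mul_eq_mul_diagonal_of_mulVec_transpose fun i => ?_
    have := hMsymm.apply_eq_inner_smul_of_gramSchmidtNormed_eq hortho hη.ne' hfix i
    subst hV'
    exact congrArg WithLp.ofLp this
  have hSX : S * X * Xᵀ = 1 := mul_eq_one_comm.1 (by rw [← Matrix.mul_assoc, hXS])
  refine ⟨fun i => -c i, ?_⟩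
  calc F (X * V') * (X * V')
      = S * X * Xᵀ * (F (X * V') * (X * V')) := by rw [hSX, Matrix.one_mul]
    _ = S * X * -(M * V') := by simp only [hMdef, Matrix.neg_mul, neg_neg, Matrix.mul_assoc]
    _ = S * (X * V') * diagonal fun i => -c i := by
      rw [hMV, ← diagonal_neg]
      simp only [Matrix.mul_neg, Matrix.mul_assoc]

theorem stmt_15 (N k : ℕ)
    (F : Matrix (Fin N) (Fin k) ℝ → Matrix (Fin N) (Fin N) ℝ)
    (hFsymm : ∀ V, (F V).IsSymm)
    (S X : Matrix (Fin N) (Fin N) ℝ)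
    (hSsymm : S.IsSymm) (hSpd : S.PosDef)
    (hX : IsUnit X) (hXS : Xᵀ * S * X = 1)
    (η : ℝ) (hη : 0 < η)
    (v' : Fin k → EuclideanSpace ℝ (Fin N))
    (hortho : Orthonormal ℝ v')
    (V' : Matrix (Fin N) (Fin k) ℝ) (hV' : V' = Matrix.of fun n i => v' i n)
    (M : Matrix (Fin N) (Fin N) ℝ) (hMdef : M = -(Xᵀ * F (X * V') * X))
    (hfix : @InnerProductSpace.gramSchmidtNormed ℝ (EuclideanSpace ℝ (Fin N)) _ _ _ (Fin k) _ _
        (inferInstance : WellFoundedLT (Fin k))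
        (fun i => v' i + η • (WithLp.equiv 2 (Fin N → ℝ)).symm (M.mulVec (v' i))) = v') :
    ∃ Λ : Fin k → ℝ,
      F (X * V') * (X * V') = S * (X * V') * Matrix.diagonal Λ :=
  stmt_15_general N k F hFsymm S X hXS η hη v' hortho V' hV' M hMdef hfix
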